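/- Let G be a starlike tree T(l_1,…,l_Δ) and v its center vertex of degree Δ. Then the second largest signless Laplacian eigenvalue of G is strictly less than 4. -/

import Mathlib

/-!
Write `Q = 2D - L` with `L` the Laplacian. If `x v = 0` then, since every other vertex has
degree at most `2`, `2 xᵀDx ≤ 4 xᵀx`; and `xᵀLx > 0` for `x ≠ 0`, because on a connected graph
`xᵀLx` vanishes only on constant vectors. So the Rayleigh quotient of `Q` is `< 4` on the
hyperplane `x v = 0`. Two orthonormal eigenvectors with eigenvalues `≥ 4` would span a plane on
which the Rayleigh quotient is `≥ 4`, and that plane meets the hyperplane.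
-/

/-- The signless Laplacian `Q(G) = D(G) + A(G)` of a graph. -/
def signlessLaplacian {V : Type*} (G : SimpleGraph V) [Fintype V] [DecidableEq V]
    [DecidableRel G.Adj] : Matrix V V ℝ :=
  Matrix.diagonal (fun v => (G.degree v : ℝ)) + G.adjMatrix ℝ

open Matrix

namespace Matrix.IsHermitian

variable {n : Type*} [Fintype n] [DecidableEq n] {M : Matrix n n ℝ}

lemma dotProduct_eigenvectorBasis (hM : M.IsHermitian) (i j : n) :
    ⇑(hM.eigenvectorBasis i) ⬝ᵥ ⇑(hM.eigenvectorBasis j) = if i = j then 1 else 0 := by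
  simpa [EuclideanSpace.inner_eq_star_dotProduct, dotProduct_comm, eq_comm] using
    orthonormal_iff_ite.mp hM.eigenvectorBasis.orthonormal j i

lemma le_dotProduct_mulVec_smul_eigenvectorBasis_add (hM : M.IsHermitian) {c : ℝ} {i j : n}
    (hij : i ≠ j) (hi : c ≤ hM.eigenvalues i) (hj : c ≤ hM.eigenvalues j) (a b : ℝ) :
    let x := a • ⇑(hM.eigenvectorBasis i) + b • ⇑(hM.eigenvectorBasis j)
    c * (x ⬝ᵥ x) ≤ x ⬝ᵥ (M *ᵥ x) := by
  simp only [mulVec_add, mulVec_smul, hM.mulVec_eigenvectorBasis, smul_smul, dotProduct_add,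
    add_dotProduct, dotProduct_smul, smul_dotProduct, hM.dotProduct_eigenvectorBasis, if_true,
    if_neg hij, if_neg hij.symm, smul_eq_mul, mul_one, mul_zero, add_zero, zero_add]
  nlinarith [mul_le_mul_of_nonneg_left hi (sq_nonneg a), mul_le_mul_of_nonneg_left hj (sq_nonneg b)]

theorem card_filter_roots_charpoly_le_one_of_dotProduct_mulVec_lt (hM : M.IsHermitian) {c : ℝ}
    (v : n) (h : ∀ x : n → ℝ, x v = 0 → x ≠ 0 → x ⬝ᵥ (M *ᵥ x) < c * (x ⬝ᵥ x)) :
    (M.charpoly.roots.filter (c ≤ ·)).card ≤ 1 := by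
  rw [hM.roots_charpoly_eq_eigenvalues, Multiset.filter_map, Multiset.card_map,
    ← Finset.filter_val, ← Finset.card_def, Finset.card_le_one]
  intro i hi j hj
  by_contra hij
  set u := ⇑(hM.eigenvectorBasis i)
  set w := ⇑(hM.eigenvectorBasis j)
  obtain ⟨a, b, hab, habv⟩ : ∃ a b : ℝ, 0 < a ^ 2 + b ^ 2 ∧ a * u v + b * w v = 0 := by
    by_cases huv : u v = 0
    · exact ⟨1, 0, by norm_num, by simp [huv]⟩
    · exact ⟨w v, -u v, by nlinarith [sq_pos_of_ne_zero huv, sq_nonneg (w v)], by ring⟩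
  have hx_sq : (a • u + b • w) ⬝ᵥ (a • u + b • w) = a ^ 2 + b ^ 2 := by
    simp only [u, w, dotProduct_add, add_dotProduct, dotProduct_smul, smul_dotProduct,
      hM.dotProduct_eigenvectorBasis, if_true, if_neg hij, if_neg (Ne.symm hij), smul_eq_mul,
      mul_one, mul_zero, add_zero, zero_add]
    ring
  have hx_ne : a • u + b • w ≠ 0 := by
    intro hx
    rw [hx, zero_dotProduct] at hx_sq
    linarith
  have hlt := h _ (by simpa using habv) hx_ne
  have hge := hM.le_dotProduct_mulVec_smul_eigenvectorBasis_add hij (by simpa using hi)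
    (by simpa using hj) a b
  linarith

end Matrix.IsHermitian

namespace SimpleGraph

variable {V : Type*} [Fintype V] [DecidableEq V] (G : SimpleGraph V) [DecidableRel G.Adj]

lemma signlessLaplacian_eq_degMatrix_add_adjMatrix :
    signlessLaplacian G = G.degMatrix ℝ + G.adjMatrix ℝ :=
  rfl

lemma isHermitian_signlessLaplacian : (signlessLaplacian G).IsHermitian := by
  rw [signlessLaplacian_eq_degMatrix_add_adjMatrix]
  exact (G.isHermitian_degMatrix ℝ).add (G.isHermitian_adjMatrix ℝ)

lemma signlessLaplacian_eq_two_smul_degMatrix_sub_lapMatrix :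
    signlessLaplacian G = (2 : ℝ) • G.degMatrix ℝ - G.lapMatrix ℝ := by
  rw [signlessLaplacian_eq_degMatrix_add_adjMatrix, lapMatrix, two_smul]
  abel

variable {G}

lemma dotProduct_lapMatrix_mulVec_pos (hG : G.Connected)
    {x : V → ℝ} {i j : V} (hij : x i ≠ x j) : 0 < x ⬝ᵥ (G.lapMatrix ℝ *ᵥ x) := by
  refine lt_of_le_of_ne (by simpa using (posSemidef_lapMatrix ℝ G).dotProduct_mulVec_nonneg x)
    fun h => hij ?_
  rw [← toLinearMap₂'_apply', eq_comm, lapMatrix_toLinearMap₂'_apply'_eq_zero_iff_forall_reachable]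
    at h
  exact h i j (hG i j)

lemma dotProduct_signlessLaplacian_mulVec_lt_four_mul (hG : G.Connected) {v : V}
    (hdeg : ∀ w, w ≠ v → G.degree w ≤ 2) {x : V → ℝ} (hxv : x v = 0) (hx : x ≠ 0) :
    x ⬝ᵥ (signlessLaplacian G *ᵥ x) < 4 * (x ⬝ᵥ x) := by
  obtain ⟨w, hw⟩ := Function.ne_iff.mp hx
  have hlap : 0 < x ⬝ᵥ (G.lapMatrix ℝ *ᵥ x) :=
    dotProduct_lapMatrix_mulVec_pos hG (i := w) (j := v) (by simpa [hxv] using hw)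
  have hdeg_le : ∑ i, (G.degree i : ℝ) * x i * x i ≤ 2 * (x ⬝ᵥ x) := by
    rw [dotProduct, Finset.mul_sum]
    refine Finset.sum_le_sum fun i _ => ?_
    rcases eq_or_ne i v with rfl | hiv
    · simp [hxv]
    · have : (G.degree i : ℝ) ≤ 2 := by exact_mod_cast hdeg i hiv
      nlinarith [mul_self_nonneg (x i)]
  rw [signlessLaplacian_eq_two_smul_degMatrix_sub_lapMatrix, sub_mulVec, dotProduct_sub,
    smul_mulVec, dotProduct_smul, dotProduct_mulVec_degMatrix, smul_eq_mul]
  linarith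

end SimpleGraph

theorem starlikeTree_second_signlessLaplacian_eigenvalue_lt_four_general
    {V : Type*} [Fintype V] [DecidableEq V] (G : SimpleGraph V) [DecidableRel G.Adj]
    (htree : G.IsTree) (v : V)
    (hother : ∀ w : V, w ≠ v → G.degree w ≤ 2) :
    (((signlessLaplacian G).charpoly.roots).filter (fun μ => 4 ≤ μ)).card ≤ 1 :=
  G.isHermitian_signlessLaplacian.card_filter_roots_charpoly_le_one_of_dotProduct_mulVec_lt v
    fun _ hxv hx => SimpleGraph.dotProduct_signlessLaplacian_mulVec_lt_four_mul htree.connected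
      hother hxv hx

/-- If `G` is a starlike tree with center `v` (the unique vertex, of degree `Δ ≥ 3`, all
other vertices having degree at most 2), then the second largest signless Laplacian
eigenvalue of `G` is strictly less than `4`; equivalently, at most one signless Laplacian
eigenvalue (with multiplicity) is `≥ 4`. -/
theorem starlikeTree_second_signlessLaplacian_eigenvalue_lt_four
    {V : Type*} [Fintype V] [DecidableEq V] (G : SimpleGraph V) [DecidableRel G.Adj]
    (htree : G.IsTree) (v : V) (Δ : ℕ) (hΔ : G.degree v = Δ) (hΔ3 : 3 ≤ Δ)
    (hother : ∀ w : V, w ≠ v → G.degree w ≤ 2) :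
    (((signlessLaplacian G).charpoly.roots).filter (fun μ => 4 ≤ μ)).card ≤ 1 :=
  starlikeTree_second_signlessLaplacian_eigenvalue_lt_four_general G htree v hother
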